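/- arXiv:1508.07490 — 2 statements merged into one kernel-verified Lean document; each statement's English description precedes it below -/
import Mathlib

section
/- There is no irreducible quartic polynomial p(x) over ℚ with four distinct real roots whose Galois group is cyclic of order 4 and whose four roots all pairwise have common tails. -/
/-- The sequence of complete quotients of the continued fraction expansion of `x`:
`cfTerm x 0 = x` and `cfTerm x (n+1) = 1 / (cfTerm x n - ⌊cfTerm x n⌋)`. -/
noncomputable def cfTerm (x : ℝ) : ℕ → ℝ
  | 0 => x
  | n + 1 => (cfTerm x n - ⌊cfTerm x n⌋)⁻¹

/-- The `n`-th partial quotient (digit) of the simple continued fraction expansion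
`[x₀; x₁, x₂, …]` of `x`. -/
noncomputable def cfDigit (x : ℝ) (n : ℕ) : ℤ := ⌊cfTerm x n⌋

/-- Two real numbers have *common tails* if their continued fraction expansions
eventually agree: there exist `m n` with `s_{m+k} = t_{n+k}` for all `k ≥ 0`. -/
def CommonTails (s t : ℝ) : Prop :=
  ∃ m n : ℕ, ∀ k : ℕ, cfDigit s (m + k) = cfDigit t (n + k)

lemma cfTerm_irrational {x : ℝ} (hx : Irrational x) : ∀ n, Irrational (cfTerm x n)
  | 0 => hx
  | n + 1 => ((cfTerm_irrational hx n).sub_intCast _).inv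

lemma cfTerm_succ_eq (x : ℝ) (n : ℕ) : cfTerm x (n+1) = (cfTerm x n - ⌊cfTerm x n⌋)⁻¹ := rfl

lemma cfTerm_sub_floor_pos {x : ℝ} (hx : Irrational x) (n : ℕ) :
    0 < cfTerm x n - ⌊cfTerm x n⌋ := by
  have h1 : (⌊cfTerm x n⌋ : ℝ) ≤ cfTerm x n := Int.floor_le _
  have h2 : cfTerm x n ≠ ⌊cfTerm x n⌋ := (cfTerm_irrational hx n).ne_int _
  cases' lt_or_eq_of_le h1 with h h
  · linarith
  · exact absurd h.symm h2

lemma cfTerm_sub_floor_lt_one (x : ℝ) (n : ℕ) : cfTerm x n - ⌊cfTerm x n⌋ < 1 := by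
  have := Int.lt_floor_add_one (cfTerm x n); linarith

lemma one_lt_cfTerm {x : ℝ} (hx : Irrational x) (n : ℕ) : 1 < cfTerm x (n+1) := by
  rw [cfTerm_succ_eq]
  exact one_lt_inv_iff₀.mpr ⟨cfTerm_sub_floor_pos hx n, cfTerm_sub_floor_lt_one x n⟩

lemma cfTerm_shift (x : ℝ) (m : ℕ) : ∀ k, cfTerm (cfTerm x m) k = cfTerm x (m + k)
  | 0 => rfl
  | k + 1 => by rw [cfTerm_succ_eq, cfTerm_shift x m k, ← cfTerm_succ_eq]; ring_nf

lemma cfDigit_shift (x : ℝ) (m k : ℕ) : cfDigit (cfTerm x m) k = cfDigit x (m + k) := by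
  unfold cfDigit; rw [cfTerm_shift]

/-- `MRel a b c d x y` means `y = (a x + b)/(c x + d)` in cross-multiplied form. -/
def MRel {R : Type*} [CommRing R] (a b c d : ℤ) (x y : R) : Prop :=
  y * ((c : R) * x + d) = (a : R) * x + b

lemma rel_comp {R : Type*} [CommRing R] {a b c d a' b' c' d' : ℤ} {x y z : R}
    (h1 : MRel a b c d x y) (h2 : MRel a' b' c' d' y z) :
    MRel (a'*a+b'*c) (a'*b+b'*d) (c'*a+d'*c) (c'*b+d'*d) x z := by
  unfold MRel at *
  push_cast
  linear_combination ((a' : R) - (c' : R)*z) * h1 + ((c : R)*x + d) * h2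

lemma rel_flip {R : Type*} [CommRing R] {a b c d : ℤ} {x y : R}
    (h : MRel a b c d x y) : MRel d (-b) (-c) a y x := by
  unfold MRel at *; push_cast; linear_combination -h

lemma det_comp (a b c d a' b' c' d' : ℤ) :
    (a'*a+b'*c)*(c'*b+d'*d) - (a'*b+b'*d)*(c'*a+d'*c) = (a*d-b*c)*(a'*d'-b'*c') := by ring

lemma rel_cfTerm {x : ℝ} (hx : Irrational x) : ∀ n : ℕ, ∃ a b c d : ℤ,
    (a*d - b*c = 1 ∨ a*d - b*c = -1) ∧ MRel a b c d (cfTerm x n) x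
  | 0 => ⟨1, 0, 0, 1, Or.inl (by ring), by unfold MRel; push_cast; ring_nf; rfl⟩
  | n + 1 => by
    obtain ⟨a, b, c, d, hdet, hrel⟩ := rel_cfTerm hx n
    have hstep : MRel ⌊cfTerm x n⌋ 1 1 0 (cfTerm x (n+1)) (cfTerm x n) := by
      unfold MRel
      push_cast
      rw [cfTerm_succ_eq]
      have h0 : cfTerm x n - ⌊cfTerm x n⌋ ≠ 0 := ne_of_gt (cfTerm_sub_floor_pos hx n)
      have h1 : (cfTerm x n - ⌊cfTerm x n⌋) * (cfTerm x n - ⌊cfTerm x n⌋)⁻¹ = 1 :=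
        mul_inv_cancel₀ h0
      linear_combination h1
    refine ⟨_, _, _, _, ?_, rel_comp hstep hrel⟩
    rw [det_comp]
    rcases hdet with h | h <;> rw [h] <;> [right; left] <;> ring

lemma cf_digits_bound : ∀ (n : ℕ) {θ φ : ℝ}, Irrational θ → Irrational φ →
    (∀ k, cfDigit θ k = cfDigit φ k) → |θ - φ| ≤ (1/4 : ℝ)^n
  | 0, θ, φ, hθ, hφ, h => by
    have h0 : ⌊θ⌋ = ⌊φ⌋ := h 0
    have h1 : (⌊θ⌋ : ℝ) ≤ θ := Int.floor_le θ
    have h2 : θ < ⌊θ⌋ + 1 := Int.lt_floor_add_one θ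
    have h3 : (⌊φ⌋ : ℝ) ≤ φ := Int.floor_le φ
    have h4 : φ < ⌊φ⌋ + 1 := Int.lt_floor_add_one φ
    rw [abs_le]
    rw [show ((⌊θ⌋ : ℤ) : ℝ) = ((⌊φ⌋ : ℤ) : ℝ) by exact_mod_cast h0] at h1 h2
    constructor <;> simp only [pow_zero] <;> linarith
  | n + 1, θ, φ, hθ, hφ, h => by
    set θ₁ := cfTerm θ 1 with hθ₁def
    set φ₁ := cfTerm φ 1 with hφ₁def
    set θ₂ := cfTerm θ 2 with hθ₂def
    set φ₂ := cfTerm φ 2 with hφ₂def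
    have hθ₁ : 1 < θ₁ := one_lt_cfTerm hθ 0
    have hφ₁ : 1 < φ₁ := one_lt_cfTerm hφ 0
    have hθ₂ : 1 < θ₂ := one_lt_cfTerm hθ 1
    have hφ₂ : 1 < φ₂ := one_lt_cfTerm hφ 1
    have hd0 : ⌊θ⌋ = ⌊φ⌋ := h 0
    have hd1 : ⌊θ₁⌋ = ⌊φ₁⌋ := h 1
    -- θ - ⌊θ⌋ = θ₁⁻¹ and θ₁ - ⌊θ₁⌋ = θ₂⁻¹
    have e1 : θ - ⌊θ⌋ = θ₁⁻¹ := by rw [hθ₁def, cfTerm_succ_eq, inv_inv]; rfl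
    have e2 : φ - ⌊φ⌋ = φ₁⁻¹ := by rw [hφ₁def, cfTerm_succ_eq, inv_inv]; rfl
    have e3 : θ₁ - ⌊θ₁⌋ = θ₂⁻¹ := by rw [hθ₂def, show (2:ℕ) = 1+1 from rfl, cfTerm_succ_eq, inv_inv]
    have e4 : φ₁ - ⌊φ₁⌋ = φ₂⁻¹ := by rw [hφ₂def, show (2:ℕ) = 1+1 from rfl, cfTerm_succ_eq, inv_inv]
    have hθ₁0 : θ₁ ≠ 0 := by linarith
    have hφ₁0 : φ₁ ≠ 0 := by linarith
    have hθ₂0 : θ₂ ≠ 0 := by linarith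
    have hφ₂0 : φ₂ ≠ 0 := by linarith
    -- key identity
    have key : θ - φ = (θ₂ - φ₂) / (θ₁ * φ₁ * θ₂ * φ₂) := by
      have c0 : ((⌊θ⌋ : ℤ) : ℝ) = ((⌊φ⌋ : ℤ) : ℝ) := by exact_mod_cast hd0
      have c1 : ((⌊θ₁⌋ : ℤ) : ℝ) = ((⌊φ₁⌋ : ℤ) : ℝ) := by exact_mod_cast hd1
      have i1 : (θ - (⌊θ⌋ : ℝ)) * θ₁ = 1 := by rw [e1]; exact inv_mul_cancel₀ hθ₁0
      have i2 : (φ - (⌊θ⌋ : ℝ)) * φ₁ = 1 := by rw [c0, e2]; exact inv_mul_cancel₀ hφ₁0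
      have i3 : (θ₁ - (⌊θ₁⌋ : ℝ)) * θ₂ = 1 := by rw [e3]; exact inv_mul_cancel₀ hθ₂0
      have i4 : (φ₁ - (⌊θ₁⌋ : ℝ)) * φ₂ = 1 := by rw [c1, e4]; exact inv_mul_cancel₀ hφ₂0
      rw [eq_div_iff (by positivity : θ₁ * φ₁ * θ₂ * φ₂ ≠ 0)]
      linear_combination (φ₁*θ₂*φ₂) * i1 - (θ₁*θ₂*φ₂) * i2 - φ₂ * i3 + θ₂ * i4
    -- digit matching for the shifted terms
    have hshift : ∀ k, cfDigit θ₂ k = cfDigit φ₂ k := by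
      intro k
      rw [hθ₂def, hφ₂def, cfDigit_shift, cfDigit_shift]
      exact h (2 + k)
    have ih : |θ₂ - φ₂| ≤ (1/4 : ℝ)^n :=
      cf_digits_bound n (cfTerm_irrational hθ 2) (cfTerm_irrational hφ 2) hshift
    -- denominators: θ₁ * θ₂ > 2 since θ₁ ≥ ⌊θ₁⌋ + θ₂⁻¹ with ⌊θ₁⌋ ≥ 1
    have hfl1 : (1 : ℤ) ≤ ⌊θ₁⌋ := by
      rw [Int.le_floor]; exact_mod_cast le_of_lt hθ₁
    have hfl2 : (1 : ℤ) ≤ ⌊φ₁⌋ := by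
      rw [Int.le_floor]; exact_mod_cast le_of_lt hφ₁
    have hfl1' : (1 : ℝ) ≤ (⌊θ₁⌋ : ℝ) := by exact_mod_cast hfl1
    have hfl2' : (1 : ℝ) ≤ (⌊φ₁⌋ : ℝ) := by exact_mod_cast hfl2
    have hinv2 : θ₂⁻¹ > 0 := by positivity
    have hinv2' : φ₂⁻¹ > 0 := by positivity
    have hmul1 : θ₁ * θ₂ > 2 := by
      have : θ₁ = ⌊θ₁⌋ + θ₂⁻¹ := by linarith [e3]
      rw [this, add_mul]
      have h2' : θ₂⁻¹ * θ₂ = 1 := inv_mul_cancel₀ hθ₂0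
      nlinarith [mul_le_mul_of_nonneg_right hfl1' (le_of_lt (lt_trans one_pos hθ₂))]
    have hmul2 : φ₁ * φ₂ > 2 := by
      have : φ₁ = ⌊φ₁⌋ + φ₂⁻¹ := by linarith [e4]
      rw [this, add_mul]
      have h2' : φ₂⁻¹ * φ₂ = 1 := inv_mul_cancel₀ hφ₂0
      nlinarith [mul_le_mul_of_nonneg_right hfl2' (le_of_lt (lt_trans one_pos hφ₂))]
    have hden : θ₁ * φ₁ * θ₂ * φ₂ > 4 := by nlinarith
    rw [key, abs_div, abs_of_pos (by linarith : (0:ℝ) < θ₁ * φ₁ * θ₂ * φ₂)]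
    rw [div_le_iff₀ (by linarith)]
    have hpow : (0:ℝ) < (1/4:ℝ)^n := by positivity
    calc |θ₂ - φ₂| ≤ (1/4:ℝ)^n := ih
      _ = (1/4:ℝ)^(n+1) * 4 := by ring
      _ ≤ (1/4:ℝ)^(n+1) * (θ₁ * φ₁ * θ₂ * φ₂) := by
          apply mul_le_mul_of_nonneg_left (le_of_lt hden) (by positivity)

lemma cf_digits_unique {θ φ : ℝ} (hθ : Irrational θ) (hφ : Irrational φ)
    (h : ∀ k, cfDigit θ k = cfDigit φ k) : θ = φ := by
  by_contra hne
  have hpos : 0 < |θ - φ| := abs_pos.mpr (sub_ne_zero.mpr hne)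
  obtain ⟨n, hn⟩ := exists_pow_lt_of_lt_one hpos (by norm_num : (1/4 : ℝ) < 1)
  exact absurd (cf_digits_bound n hθ hφ h) (not_le.mpr hn)

lemma commonTails_rel {s t : ℝ} (hs : Irrational s) (ht : Irrational t) (h : CommonTails s t) :
    ∃ a b c d : ℤ, (a*d - b*c = 1 ∨ a*d - b*c = -1) ∧ MRel a b c d s t := by
  obtain ⟨m, n, hmn⟩ := h
  have hθφ : cfTerm s m = cfTerm t n := by
    apply cf_digits_unique (cfTerm_irrational hs m) (cfTerm_irrational ht n)
    intro k
    rw [cfDigit_shift, cfDigit_shift]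
    exact hmn k
  obtain ⟨a, b, c, d, hdet, hrel⟩ := rel_cfTerm hs m
  obtain ⟨a', b', c', d', hdet', hrel'⟩ := rel_cfTerm ht n
  rw [hθφ] at hrel
  have hflip := rel_flip hrel
  refine ⟨_, _, _, _, ?_, rel_comp hflip hrel'⟩
  rw [det_comp]
  have : d*a - (-b)*(-c) = a*d - b*c := by ring
  rw [this]
  rcases hdet with h1 | h1 <;> rcases hdet' with h2 | h2 <;> rw [h1, h2] <;> norm_num

lemma mrel_map {R S : Type*} [CommRing R] [CommRing S] (f : R →+* S) {a b c d : ℤ} {x y : R}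
    (h : MRel a b c d x y) : MRel a b c d (f x) (f y) := by
  unfold MRel at *
  have := congrArg f h
  simpa only [map_mul, map_add, map_intCast] using this

lemma mrel_of_injective {R S : Type*} [CommRing R] [CommRing S] (f : R →+* S)
    (hf : Function.Injective f) {a b c d : ℤ} {x y : R}
    (h : MRel a b c d (f x) (f y)) : MRel a b c d x y := by
  unfold MRel at *
  apply hf
  simpa only [map_mul, map_add, map_intCast] using h

/-- If an integer 2×2 matrix with determinant ±1 has fourth power a scalar matrix,
then its square is a nonzero scalar matrix. -/
lemma g2_scalar {a b c d : ℤ} (hdet : a*d - b*c = 1 ∨ a*d - b*c = -1)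
    (hB : (a*a+b*c)*(a*b+b*d) + (a*b+b*d)*(c*b+d*d) = 0)
    (hC : (c*a+d*c)*(a*a+b*c) + (c*b+d*d)*(c*a+d*c) = 0)
    (hAD : (a*a+b*c)*(a*a+b*c) + (a*b+b*d)*(c*a+d*c)
         = (c*a+d*c)*(a*b+b*d) + (c*b+d*d)*(c*b+d*d)) :
    ∃ e : ℤ, e * e = 1 ∧ a*b+b*d = 0 ∧ c*a+d*c = 0 ∧ a*a+b*c = e ∧ c*b+d*d = e := by
  have htr : (a+d)*(a+d) - 2*(a*d - b*c) ≠ 0 := by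
    intro h0
    rcases hdet with h | h <;> rw [h] at h0
    · have h1 : 2*(a+d) ≤ 3 := by nlinarith [sq_nonneg (a+d-1)]
      have h2 : -3 ≤ 2*(a+d) := by nlinarith [sq_nonneg (a+d+1)]
      have h4 : 0 ≤ (1-(a+d))*(1+(a+d)) := mul_nonneg (by omega) (by omega)
      nlinarith [h4]
    · nlinarith [sq_nonneg (a+d)]
  have hb : (a+d) * b = 0 := by
    have h1 : ((a+d)*(a+d) - 2*(a*d - b*c)) * ((a+d)*b) = 0 := by linear_combination hB
    exact (mul_eq_zero.mp h1).resolve_left htr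
  have hc : (a+d) * c = 0 := by
    have h1 : ((a+d)*(a+d) - 2*(a*d - b*c)) * ((a+d)*c) = 0 := by linear_combination hC
    exact (mul_eq_zero.mp h1).resolve_left htr
  have had : (a+d) * (a - d) = 0 := by
    have h1 : ((a+d)*(a+d) - 2*(a*d - b*c)) * ((a+d)*(a-d)) = 0 := by linear_combination hAD
    exact (mul_eq_zero.mp h1).resolve_left htr
  have hdd : (a*d - b*c) * (a*d - b*c) = 1 := by
    rcases hdet with h | h <;> rw [h] <;> norm_num
  refine ⟨a*a+b*c, ?_, by linear_combination hb, by linear_combination hc,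
    rfl, by linear_combination -had⟩
  linear_combination (a*a+b*c)*had + ((a+d)*c)*hb + hdd

lemma quad_coeffs {K : Type*} [Field K] [Algebra ℚ K] {α : K}
    (hmin : (minpoly ℚ α).degree = 4) {A B C D : ℤ}
    (h : MRel A B C D α α) : C = 0 ∧ B = 0 ∧ A = D := by
  have haq : Polynomial.aeval α (Polynomial.C (C : ℚ) * Polynomial.X ^ 2
      + Polynomial.C ((D : ℚ) - (A : ℚ)) * Polynomial.X - Polynomial.C (B : ℚ)) = 0 := by
    unfold MRel at h
    simp only [map_add, map_sub, map_mul, map_pow, Polynomial.aeval_C, Polynomial.aeval_X,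
      map_intCast]
    linear_combination h
  have hqp0 : Polynomial.C (C : ℚ) * Polynomial.X ^ 2
      + Polynomial.C ((D : ℚ) - (A : ℚ)) * Polynomial.X - Polynomial.C (B : ℚ) = 0 := by
    by_contra hne
    have h1 := minpoly.degree_le_of_ne_zero ℚ α hne haq
    rw [hmin] at h1
    have h2 : (Polynomial.C (C : ℚ) * Polynomial.X ^ 2
        + Polynomial.C ((D : ℚ) - (A : ℚ)) * Polynomial.X - Polynomial.C (B : ℚ)).degree ≤ 2 := by
      compute_degree
    have h3 := le_trans h1 h2
    norm_num at h3
  have e2 := congrArg (fun r : Polynomial ℚ => r.coeff 2) hqp0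
  have e1 := congrArg (fun r : Polynomial ℚ => r.coeff 1) hqp0
  have e0 := congrArg (fun r : Polynomial ℚ => r.coeff 0) hqp0
  simp only [Polynomial.coeff_add, Polynomial.coeff_sub, Polynomial.coeff_C_mul,
    Polynomial.coeff_X_pow, Polynomial.coeff_C, Polynomial.coeff_X, Polynomial.coeff_zero] at e2 e1 e0
  norm_num at e2 e1 e0
  refine ⟨by exact_mod_cast e2, by exact_mod_cast e0, ?_⟩
  have : (D : ℚ) = (A : ℚ) := by linarith [e1]
  exact_mod_cast this.symm

/-- No irreducible quartic over ℚ with four distinct real roots has Galois group cyclic of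
order 4 together with all four roots pairwise having common tails. -/
theorem roots_common_tails_stmt_14 :
    ¬ ∃ (p : Polynomial ℚ) (r₁ r₂ r₃ r₄ : ℝ),
      Irreducible p ∧ p.degree = 4 ∧
      r₁ ≠ r₂ ∧ r₁ ≠ r₃ ∧ r₁ ≠ r₄ ∧ r₂ ≠ r₃ ∧ r₂ ≠ r₄ ∧ r₃ ≠ r₄ ∧
      Polynomial.aeval r₁ p = 0 ∧ Polynomial.aeval r₂ p = 0 ∧
      Polynomial.aeval r₃ p = 0 ∧ Polynomial.aeval r₄ p = 0 ∧
      IsCyclic p.Gal ∧ Nat.card p.Gal = 4 ∧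
      CommonTails r₁ r₂ ∧ CommonTails r₁ r₃ ∧ CommonTails r₁ r₄ ∧
      CommonTails r₂ r₃ ∧ CommonTails r₂ r₄ ∧ CommonTails r₃ r₄ := by
  rintro ⟨p, r₁, r₂, r₃, r₄, hirr, hdeg, h12, h13, h14, h23, h24, h34,
    hr1, hr2, hr3, hr4, hcyc, hcard, c12, c13, c14, c23, c24, c34⟩
  haveI := hcyc
  have hp0 : p ≠ 0 := hirr.ne_zero
  have hndeg : p.natDegree = 4 := Polynomial.natDegree_eq_of_degree_eq_some hdeg
  -- the image of p in ℝ[X]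
  set q : Polynomial ℝ := p.map (algebraMap ℚ ℝ) with hq
  have hq0 : q ≠ 0 := Polynomial.map_ne_zero hp0
  have hqdeg : q.natDegree = 4 := by rw [hq, Polynomial.natDegree_map]; exact hndeg
  have hmem : ∀ x : ℝ, Polynomial.aeval x p = 0 → x ∈ q.roots := by
    intro x hx
    rw [Polynomial.mem_roots hq0]
    rwa [Polynomial.IsRoot.def, hq, Polynomial.eval_map, ← Polynomial.aeval_def]
  have hScard : ({r₁, r₂, r₃, r₄} : Finset ℝ).card = 4 := by
    rw [Finset.card_insert_of_notMem (by simp [h12, h13, h14]),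
        Finset.card_insert_of_notMem (by simp [h23, h24]),
        Finset.card_insert_of_notMem (by simp [h34]), Finset.card_singleton]
  have hsub : ({r₁, r₂, r₃, r₄} : Finset ℝ) ⊆ q.roots.toFinset := by
    intro x hx
    rw [Multiset.mem_toFinset]
    simp only [Finset.mem_insert, Finset.mem_singleton] at hx
    rcases hx with rfl | rfl | rfl | rfl
    exacts [hmem _ hr1, hmem _ hr2, hmem _ hr3, hmem _ hr4]
  have hcard1 : q.roots.toFinset.card ≤ q.roots.card := q.roots.toFinset_card_le
  have hcard2 : q.roots.card ≤ 4 := hqdeg ▸ q.card_roots'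
  have hcard3 : 4 ≤ q.roots.toFinset.card := hScard ▸ Finset.card_le_card hsub
  have hrootsFin : ({r₁, r₂, r₃, r₄} : Finset ℝ) = q.roots.toFinset :=
    Finset.eq_of_subset_of_card_le hsub (by omega)
  have hroots_mem : ∀ x : ℝ, Polynomial.aeval x p = 0 →
      x = r₁ ∨ x = r₂ ∨ x = r₃ ∨ x = r₄ := by
    intro x hx
    have : x ∈ ({r₁, r₂, r₃, r₄} : Finset ℝ) := by
      rw [hrootsFin, Multiset.mem_toFinset]; exact hmem x hx
    simpa using this
  have hsplits : (p.map (algebraMap ℚ ℝ)).Splits := by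
    apply Polynomial.splits_iff_card_roots.mpr
    show Multiset.card q.roots = q.natDegree
    omega
  haveI : Fact ((p.map (algebraMap ℚ ℝ)).Splits) := ⟨hsplits⟩
  -- all real roots are irrational
  have hirrat : ∀ x : ℝ, Polynomial.aeval x p = 0 → Irrational x := by
    intro x hx hrat
    obtain ⟨y, hy⟩ := hrat
    have hy0 : Polynomial.aeval (y : ℚ) p = 0 := by
      have h2 : (algebraMap ℚ ℝ) (Polynomial.aeval y p) = 0 := by
        rw [← Polynomial.aeval_algebraMap_apply]
        simpa [hy] using hx
      exact (map_eq_zero _).mp h2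
    have hdvd : (Polynomial.X - Polynomial.C (y : ℚ)) ∣ p :=
      Polynomial.dvd_iff_isRoot.mpr (by simpa [Polynomial.IsRoot] using hy0)
    obtain ⟨e, he⟩ := hdvd
    rcases hirr.isUnit_or_isUnit he with h | h
    · exact Polynomial.not_isUnit_X_sub_C _ h
    · have hdeg1 : p.degree = 1 := by
        rw [he, Polynomial.degree_mul, Polynomial.degree_X_sub_C,
          Polynomial.degree_eq_zero_of_isUnit h]
        rfl
      rw [hdeg] at hdeg1
      norm_num at hdeg1
  -- splitting field setup
  have fInj : Function.Injective (algebraMap p.SplittingField ℝ) :=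
    (algebraMap p.SplittingField ℝ).injective
  have hrootK : ∀ x : p.SplittingField, Polynomial.aeval x p = 0 →
      Polynomial.aeval (algebraMap p.SplittingField ℝ x) p = 0 := by
    intro x hx
    rw [← IsScalarTower.toAlgHom_apply ℚ p.SplittingField ℝ,
      Polynomial.aeval_algHom_apply, hx, map_zero]
  have hRmem : ∀ x : ℝ, Polynomial.aeval x p = 0 → x ∈ p.rootSet ℝ := by
    intro x hx; rw [Polynomial.mem_rootSet]; exact ⟨hp0, hx⟩
  set E := Polynomial.Gal.rootsEquivRoots p ℝ with hE
  have hEcoe : ∀ y : p.rootSet p.SplittingField,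
      (E y : ℝ) = algebraMap p.SplittingField ℝ (y : p.SplittingField) := fun _ => rfl
  set R1 : p.rootSet ℝ := ⟨r₁, hRmem _ hr1⟩ with hR1
  set R2 : p.rootSet ℝ := ⟨r₂, hRmem _ hr2⟩ with hR2
  set R3 : p.rootSet ℝ := ⟨r₃, hRmem _ hr3⟩ with hR3
  set A1 := E.symm R1 with hA1
  set A2 := E.symm R2 with hA2
  set A3 := E.symm R3 with hA3
  set α₁ := (A1 : p.SplittingField) with hα₁
  have hfα : ∀ y : p.rootSet ℝ,
      algebraMap p.SplittingField ℝ ((E.symm y : p.rootSet p.SplittingField) : p.SplittingField)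
        = (y : ℝ) := by
    intro y
    exact congrArg Subtype.val (E.apply_symm_apply y)
  have hf1 : algebraMap p.SplittingField ℝ α₁ = r₁ := hfα R1
  have hf2 : algebraMap p.SplittingField ℝ
      ((E.symm R2 : p.rootSet p.SplittingField) : p.SplittingField) = r₂ := hfα R2
  have hf3 : algebraMap p.SplittingField ℝ
      ((E.symm R3 : p.rootSet p.SplittingField) : p.SplittingField) = r₃ := hfα R3
  have hα₁root : Polynomial.aeval α₁ p = 0 := (Polynomial.mem_rootSet.mp A1.2).2
  have hact : ∀ (τ : p.Gal) (y : p.rootSet p.SplittingField),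
      ((τ • y : p.rootSet p.SplittingField) : p.SplittingField) = τ (y : p.SplittingField) :=
    fun _ _ => rfl
  haveI htrans := Polynomial.Gal.galAction_isPretransitive p ℝ hirr
  haveI : Finite p.Gal := Nat.finite_of_card_ne_zero (by rw [hcard]; norm_num)
  -- generator
  obtain ⟨σ, hσ⟩ := IsCyclic.exists_generator (α := p.Gal)
  -- a group element moving A1 to A2 resp. A3, as powers of σ
  have hmove : ∀ y : p.rootSet ℝ, ∃ n : ℕ,
      (σ ^ n) α₁ = ((E.symm y : p.rootSet p.SplittingField) : p.SplittingField) := by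
    intro y
    obtain ⟨τ, hτ⟩ := MulAction.exists_smul_eq p.Gal R1 y
    obtain ⟨n, hn⟩ := mem_powers_iff_mem_zpowers.mpr (hσ τ)
    refine ⟨n, ?_⟩
    have hn' : σ ^ n = τ := hn
    rw [hn']
    rw [Polynomial.Gal.smul_def] at hτ
    have := congrArg E.symm hτ
    rw [E.symm_apply_apply] at this
    rw [← hact τ A1, hA1]
    exact congrArg Subtype.val this
  -- key: σ² does not fix α₁
  have hkey : σ (σ α₁) ≠ α₁ := by
    intro hfix
    have hpows : ∀ n : ℕ, (σ ^ n) α₁ = α₁ ∨ (σ ^ n) α₁ = σ α₁ := by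
      intro n
      induction n using Nat.strong_induction_on with
      | _ n ih =>
        match n with
        | 0 => left; rw [pow_zero]; rfl
        | 1 => right; rw [pow_one]
        | (k+2) =>
          have h2 : (σ ^ (k+2)) α₁ = σ (σ ((σ ^ k) α₁)) := by
            rw [pow_succ', pow_succ']
            rfl
          rcases ih k (by omega) with h | h
          · left; rw [h2, h, hfix]
          · right; rw [h2, h, hfix]
    obtain ⟨n2, hn2⟩ := hmove R2
    obtain ⟨n3, hn3⟩ := hmove R3
    have hne2 : ((E.symm R2 : p.rootSet p.SplittingField) : p.SplittingField) ≠ α₁ := by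
      intro h
      apply h12
      rw [← hf1, ← hf2, h]
    have hne3 : ((E.symm R3 : p.rootSet p.SplittingField) : p.SplittingField) ≠ α₁ := by
      intro h
      apply h13
      rw [← hf1, ← hf3, h]
    have hne23 : ((E.symm R2 : p.rootSet p.SplittingField) : p.SplittingField) ≠
        ((E.symm R3 : p.rootSet p.SplittingField) : p.SplittingField) := by
      intro h
      apply h23
      rw [← hf2, ← hf3, h]
    rcases hpows n2 with h | h
    · exact hne2 (hn2 ▸ h)
    · rcases hpows n3 with h' | h'
      · exact hne3 (hn3 ▸ h')
      · exact hne23 (by rw [← hn2, h, ← h', hn3])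
  -- σ⁴ = 1
  have hσ4 : ∀ x : p.SplittingField, σ (σ (σ (σ x))) = x := by
    intro x
    have h4 : σ ^ 4 = 1 := by
      have := pow_card_eq_one' (x := σ)
      rwa [hcard] at this
    have : (σ ^ 4) x = x := by rw [h4]; rfl
    calc σ (σ (σ (σ x))) = (σ ^ 4) x := by rw [pow_succ, pow_succ, pow_succ, pow_one]; rfl
      _ = x := this
  -- σ α₁ is a root distinct from α₁
  have hβroot : Polynomial.aeval (σ α₁) p = 0 := by
    have h := Polynomial.aeval_algHom_apply σ.toAlgHom α₁ p
    rw [hα₁root, map_zero] at h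
    exact h
  have hβne : σ α₁ ≠ α₁ := by
    intro h
    exact hkey (by rw [h]; exact h)
  -- f β is one of the four real roots, distinct from r₁, hence common tails with r₁
  have hfβroot : Polynomial.aeval (algebraMap p.SplittingField ℝ (σ α₁)) p = 0 := hrootK _ hβroot
  have hfβne : algebraMap p.SplittingField ℝ (σ α₁) ≠ r₁ := by
    intro h
    exact hβne (fInj (by rw [h, hf1]))
  have hct : CommonTails r₁ (algebraMap p.SplittingField ℝ (σ α₁)) := by
    rcases hroots_mem _ hfβroot with h | h | h | h
    · exact absurd h hfβne
    · rw [h]; exact c12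
    · rw [h]; exact c13
    · rw [h]; exact c14
  -- get the Möbius relation
  obtain ⟨a, b, c, d, hdet, hrel⟩ :=
    commonTails_rel (hirrat _ hr1) (hirrat _ hfβroot) hct
  rw [← hf1] at hrel
  have hrelK : MRel a b c d α₁ (σ α₁) :=
    mrel_of_injective (algebraMap p.SplittingField ℝ) fInj hrel
  -- iterate via the Galois action
  have hmap : ∀ {A B C D : ℤ} {x y : p.SplittingField},
      MRel A B C D x y → MRel A B C D (σ x) (σ y) := fun {A B C D x y} h => by
    have h2 := mrel_map (σ : p.SplittingField ≃ₐ[ℚ] p.SplittingField).toAlgHom.toRingHom h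
    exact h2
  have h2 : MRel a b c d (σ α₁) (σ (σ α₁)) := hmap hrelK
  have r2 := rel_comp hrelK h2
  have s1 := hmap r2
  have s2 := hmap s1
  have r4 := rel_comp r2 s2
  rw [hσ4 α₁] at r4
  -- the minimal polynomial of α₁ has degree 4
  have hmindeg : (minpoly ℚ α₁).degree = 4 := by
    obtain ⟨e, he⟩ := minpoly.dvd ℚ α₁ hα₁root
    rcases hirr.isUnit_or_isUnit he with h | h
    · exact absurd h (minpoly.not_isUnit ℚ α₁)
    · have hpd : p.degree = (minpoly ℚ α₁).degree := by
        conv_lhs => rw [he]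
        rw [Polynomial.degree_mul, Polynomial.degree_eq_zero_of_isUnit h, add_zero]
      rw [← hpd, hdeg]
  obtain ⟨hC4, hB4, hA4D4⟩ := quad_coeffs hmindeg r4
  obtain ⟨e, hee, hB2, hC2, hA2, hD2⟩ := g2_scalar hdet hB4 hC4 hA4D4
  apply hkey
  unfold MRel at r2
  rw [hB2, hC2, hA2, hD2] at r2
  push_cast at r2
  have hee' : (e : p.SplittingField) * (e : p.SplittingField) = 1 := by
    exact_mod_cast congrArg (fun z : ℤ => (z : p.SplittingField)) hee
  have h1 : (e : p.SplittingField) * σ (σ α₁) = (e : p.SplittingField) * α₁ := by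
    linear_combination r2
  calc σ (σ α₁) = (e : p.SplittingField) * (e : p.SplittingField) * σ (σ α₁) := by
        rw [hee', one_mul]
    _ = (e : p.SplittingField) * ((e : p.SplittingField) * σ (σ α₁)) := by ring
    _ = (e : p.SplittingField) * ((e : p.SplittingField) * α₁) := by rw [h1]
    _ = α₁ := by rw [← mul_assoc, hee', one_mul]
end

section
/- Let a and c be integers such that the polynomial p(x) = a·x³ + (-3a - c)·x² + c·x + a is irreducible over ℚ, and let r be a real root of p. Then (r - 1)/r is also a root of p; consequently r and (r-1)/r have common tails, since (r-1)/r = (1·r + (-1))/(1·r + 0) with |1·0 - (-1)·1| = 1. -/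
lemma cfTerm_add (x : ℝ) (m : ℕ) : ∀ k, cfTerm x (m + k) = cfTerm (cfTerm x m) k
  | 0 => rfl
  | k + 1 => by
      show (cfTerm x (m + k) - (⌊cfTerm x (m + k)⌋ : ℝ))⁻¹
          = (cfTerm (cfTerm x m) k - (⌊cfTerm (cfTerm x m) k⌋ : ℝ))⁻¹
      rw [cfTerm_add x m k]

lemma commonTails_of_cfTerm_eq {x y : ℝ} {m n : ℕ} (h : cfTerm x m = cfTerm y n) :
    CommonTails x y :=
  ⟨m, n, fun k => by unfold cfDigit; rw [cfTerm_add, h, ← cfTerm_add]⟩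

lemma CommonTails.symm' {x y : ℝ} : CommonTails x y → CommonTails y x
  | ⟨m, n, h⟩ => ⟨n, m, fun k => (h k).symm⟩

lemma CommonTails.trans' {x y z : ℝ} : CommonTails x y → CommonTails y z → CommonTails x z
  | ⟨m, n, h⟩, ⟨m', n', h'⟩ => by
    refine ⟨m + (max n m' - n), n' + (max n m' - m'), fun k => ?_⟩
    have h1 := h (max n m' - n + k)
    have h2 := h' (max n m' - m' + k)
    have e1 : m + (max n m' - n + k) = m + (max n m' - n) + k := by omega
    have e2 : n + (max n m' - n + k) = max n m' + k := by omega
    have e3 : m' + (max n m' - m' + k) = max n m' + k := by omega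
    have e4 : n' + (max n m' - m' + k) = n' + (max n m' - m') + k := by omega
    rw [e1, e2] at h1; rw [e3, e4] at h2
    rw [h1, ← h2]

lemma cfTerm_one (x : ℝ) (n : ℤ) (h1 : (n : ℝ) ≤ x) (h2 : x < n + 1) :
    cfTerm x 1 = (x - n)⁻¹ := by
  have hfl : ⌊x⌋ = n := Int.floor_eq_iff.mpr ⟨h1, h2⟩
  show (x - (⌊x⌋ : ℝ))⁻¹ = _
  rw [hfl]

lemma cfTerm_one_add_int (x : ℝ) (n : ℤ) : cfTerm (x + n) 1 = cfTerm x 1 := by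
  show (x + n - (⌊x + (n : ℝ)⌋ : ℝ))⁻¹ = (x - (⌊x⌋ : ℝ))⁻¹
  rw [Int.floor_add_intCast]
  push_cast
  ring_nf

/-- Case `x > 1` of Serret's step for the map `x ↦ 1 - 1/x`. -/
lemma tails_A {x : ℝ} (hx : Irrational x) (hx1 : 1 < x) : CommonTails x (1 - 1/x) := by
  have hx0 : (0:ℝ) < x := lt_trans one_pos hx1
  have hxm1 : (0:ℝ) < x - 1 := by linarith
  have hinvlt : 1/x < 1 := by rw [div_lt_one hx0]; exact hx1
  have hinvpos : 0 < 1/x := by positivity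
  have hs1 : cfTerm (1 - 1/x) 1 = 1 + 1/(x-1) := by
    rw [cfTerm_one (1 - 1/x) 0 (by push_cast; linarith) (by push_cast; linarith)]
    push_cast
    rw [sub_zero]
    have hne : x ≠ 0 := hx0.ne'
    have hne1 : x - 1 ≠ 0 := hxm1.ne'
    have hs : 1 - 1/x ≠ 0 := by linarith
    field_simp
    ring
  have hne2 : x ≠ 2 := by
    have := hx.ne_int 2; simpa using this
  rcases lt_or_gt_of_ne hne2 with h2 | h2
  · -- 1 < x < 2
    have hx1' : cfTerm x 1 = (x - ((1:ℤ):ℝ))⁻¹ :=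
      cfTerm_one x 1 (by push_cast; linarith) (by push_cast; linarith)
    have key : cfTerm (1 - 1/x) 2 = cfTerm x 2 := by
      have e1 : cfTerm (1 - 1/x) 2 = cfTerm (cfTerm (1 - 1/x) 1) 1 := cfTerm_add _ 1 1
      have e2 : cfTerm x 2 = cfTerm (cfTerm x 1) 1 := cfTerm_add _ 1 1
      rw [e1, e2, hs1, hx1']
      have : (1 : ℝ) + 1/(x-1) = (x - ((1:ℤ):ℝ))⁻¹ + ((1:ℤ) : ℝ) := by
        push_cast; rw [inv_eq_one_div]; ring
      rw [this, cfTerm_one_add_int]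
    exact (commonTails_of_cfTerm_eq key).symm'
  · -- x > 2
    have key : cfTerm (1 - 1/x) 3 = cfTerm x 1 := by
      have hstep : cfTerm (1 - 1/x) 2 = x - 1 := by
        have e1 : cfTerm (1 - 1/x) 2 = cfTerm (cfTerm (1 - 1/x) 1) 1 := cfTerm_add _ 1 1
        rw [e1, hs1]
        have hb1 : ((1:ℤ) : ℝ) ≤ 1 + 1/(x-1) := by
          have : 0 < 1/(x-1) := by positivity
          push_cast; linarith
        have hb2 : 1 + 1/(x-1) < (1:ℤ) + 1 := by
          have : 1/(x-1) < 1 := by rw [div_lt_one hxm1]; linarith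
          push_cast; linarith
        rw [cfTerm_one _ 1 hb1 hb2]
        push_cast
        have hne1 : x - 1 ≠ 0 := hxm1.ne'
        field_simp
        ring
      have e1 : cfTerm (1 - 1/x) 3 = cfTerm (cfTerm (1 - 1/x) 2) 1 := cfTerm_add _ 2 1
      rw [e1, hstep]
      have : x - 1 = x + ((-1:ℤ) : ℝ) := by push_cast; ring
      rw [this, cfTerm_one_add_int]
    exact (commonTails_of_cfTerm_eq key).symm'

/-- Case `0 < x < 1` of Serret's step for the map `x ↦ 1 - 1/x`. -/
lemma tails_B {x : ℝ} (hx : Irrational x) (hx0 : 0 < x) (hx1 : x < 1) :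
    CommonTails x (1 - 1/x) := by
  have hR : Irrational x⁻¹ := hx.inv
  have hR1 : 1 < x⁻¹ := (one_lt_inv₀ hx0).mpr hx1
  set n0 : ℤ := ⌊x⁻¹⌋ with hn0
  set f : ℝ := x⁻¹ - n0 with hf
  have hfl : (n0 : ℝ) ≤ x⁻¹ := Int.floor_le _
  have hfu : x⁻¹ < n0 + 1 := by
    have := Int.lt_floor_add_one x⁻¹; push_cast at this ⊢; linarith
  have hfI : Irrational f := hR.sub_intCast n0
  have hf0 : 0 < f := by
    have hne : (n0 : ℝ) ≠ x⁻¹ := fun h => hR ⟨(n0 : ℚ), by push_cast [h]; rfl⟩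
    have := lt_of_le_of_ne hfl hne
    simp only [hf]; linarith
  have hf1 : f < 1 := by rw [hf]; linarith
  have hfne : f ≠ 0 := hf0.ne'
  have h1f0 : 0 < 1 - f := by linarith
  -- first terms of x
  have hc1 : cfTerm x 1 = x⁻¹ := by
    rw [cfTerm_one x 0 (by push_cast; linarith) (by push_cast; linarith)]
    push_cast; rw [sub_zero]
  have hc2 : cfTerm x 2 = f⁻¹ := by
    have e : cfTerm x 2 = cfTerm (cfTerm x 1) 1 := cfTerm_add _ 1 1
    rw [e, hc1, cfTerm_one x⁻¹ n0 hfl (by linarith), ← hf]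
  -- first term of s = 1 - 1/x = 1 - x⁻¹
  have hs1 : cfTerm (1 - 1/x) 1 = (1 - f)⁻¹ := by
    rw [show (1:ℝ) - 1/x = 1 - x⁻¹ by rw [one_div]]
    have hf1' : x⁻¹ - (n0:ℝ) < 1 := by rw [← hf]; exact hf1
    have hf0' : 0 < x⁻¹ - (n0:ℝ) := by rw [← hf]; exact hf0
    rw [cfTerm_one (1 - x⁻¹) (-n0) (by push_cast; linarith) (by push_cast; linarith)]
    congr 1
    rw [hf]; push_cast; ring
  have hfhalf : f ≠ 1/2 := by
    have := hfI.ne_rat (1/2); rw [ne_eq] at this ⊢; intro h; apply this; rw [h]; norm_num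
  rcases lt_or_gt_of_ne hfhalf with hhalf | hhalf
  · -- f < 1/2 :  cfTerm s 3 = cfTerm x 3
    have h1f : 1 < (1-f)⁻¹ := by
      rw [lt_inv_comm₀ one_pos h1f0, inv_one]; linarith
    have h1f2 : (1-f)⁻¹ < 2 := by
      rw [inv_lt_comm₀ h1f0 two_pos, show (2:ℝ)⁻¹ = 1/2 by norm_num]; linarith
    have hs2 : cfTerm (1 - 1/x) 2 = f⁻¹ - 1 := by
      have e : cfTerm (1 - 1/x) 2 = cfTerm (cfTerm (1 - 1/x) 1) 1 := cfTerm_add _ 1 1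
      rw [e, hs1, cfTerm_one ((1-f)⁻¹) 1 (by push_cast; linarith) (by push_cast; linarith)]
      push_cast
      have hd : (1-f)⁻¹ - 1 ≠ 0 := by linarith
      have h1fne : (1:ℝ) - f ≠ 0 := h1f0.ne'
      field_simp
      rw [sub_sub_cancel, div_self hfne]
    have key : cfTerm (1 - 1/x) 3 = cfTerm x 3 := by
      have e : cfTerm (1 - 1/x) 3 = cfTerm (cfTerm (1 - 1/x) 2) 1 := cfTerm_add _ 2 1
      have e2 : cfTerm x 3 = cfTerm (cfTerm x 2) 1 := cfTerm_add _ 2 1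
      rw [e, e2, hs2, hc2]
      rw [show f⁻¹ - 1 = f⁻¹ + ((-1:ℤ):ℝ) by push_cast; ring, cfTerm_one_add_int]
    exact (commonTails_of_cfTerm_eq key).symm'
  · -- f > 1/2 : cfTerm x 4 = cfTerm s 2
    have hif : 1 < f⁻¹ := by rw [lt_inv_comm₀ one_pos hf0, inv_one]; linarith
    have hif2 : f⁻¹ < 2 := by
      rw [inv_lt_comm₀ hf0 two_pos, show (2:ℝ)⁻¹ = 1/2 by norm_num]; linarith
    have hc3 : cfTerm x 3 = (1-f)⁻¹ - 1 := by
      have e : cfTerm x 3 = cfTerm (cfTerm x 2) 1 := cfTerm_add _ 2 1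
      rw [e, hc2, cfTerm_one (f⁻¹) 1 (by push_cast; linarith) (by push_cast; linarith)]
      push_cast
      have hd : f⁻¹ - 1 ≠ 0 := by linarith
      have h1fne : (1:ℝ) - f ≠ 0 := h1f0.ne'
      field_simp
      ring
    have key : cfTerm x 4 = cfTerm (1 - 1/x) 2 := by
      have e : cfTerm x 4 = cfTerm (cfTerm x 3) 1 := cfTerm_add _ 3 1
      have e2 : cfTerm (1 - 1/x) 2 = cfTerm (cfTerm (1 - 1/x) 1) 1 := cfTerm_add _ 1 1
      rw [e, e2, hc3, hs1]
      rw [show (1-f)⁻¹ - 1 = (1-f)⁻¹ + ((-1:ℤ):ℝ) by push_cast; ring, cfTerm_one_add_int]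
    exact commonTails_of_cfTerm_eq key

/-- For any irrational `x`, `x` and `1 - 1/x` have common tails. -/
lemma tails_main {x : ℝ} (hx : Irrational x) : CommonTails x (1 - 1/x) := by
  have hxne : x ≠ 0 := hx.ne_zero
  have hxne1 : x ≠ 1 := hx.ne_one
  rcases lt_trichotomy x 0 with h | h | h
  · -- x < 0 : s = 1 - 1/x > 1, go around the 3-cycle
    set s := 1 - 1/x with hs
    have hsI : Irrational s := by
      rw [hs, one_div]; simpa using hx.inv.intCast_sub 1
    have hs1 : 1 < s := by
      have : 1/x < 0 := by exact div_neg_of_pos_of_neg one_pos h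
      rw [hs]; linarith
    have hs0 : (0:ℝ) < s := lt_trans one_pos hs1
    have hsne : s ≠ 0 := hs0.ne'
    have h1 : CommonTails s (1 - 1/s) := tails_A hsI hs1
    have hssI : Irrational (1 - 1/s) := by
      rw [one_div]; simpa using hsI.inv.intCast_sub 1
    have hss0 : 0 < 1 - 1/s := by
      have : 1/s < 1 := by rw [div_lt_one hs0]; exact hs1
      linarith
    have hss1 : 1 - 1/s < 1 := by
      have : 0 < 1/s := by positivity
      linarith
    have h2 : CommonTails (1 - 1/s) (1 - 1/(1 - 1/s)) := tails_B hssI hss0 hss1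
    have hcycle : 1 - 1/(1 - 1/s) = x := by
      rw [hs]
      have hx1 : x - 1 ≠ 0 := fun hh => hxne1 (by linarith)
      have e1 : 1 - 1/x = (x-1)/x := by field_simp
      rw [e1]
      have e2 : 1 - 1/((x-1)/x) = -1/(x-1) := by
        rw [one_div_div]; field_simp; ring
      rw [e2, one_div_div]
      ring
    rw [hcycle] at h2
    exact (h1.trans' h2).symm'
  · exact absurd h hxne
  · rcases lt_or_gt_of_ne hxne1 with h1 | h1
    · exact tails_B hx h h1
    · exact tails_A hx h1

/-- For integers `a, c` with `p(x) = a·x³ + (-3a - c)·x² + c·x + a` irreducible over ℚ and a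
real root `r` of `p`: `(r - 1)/r` is also a root of `p`, and `r` and `(r - 1)/r` have
common tails. -/
theorem roots_common_tails_stmt_16 (a c : ℤ) (p : Polynomial ℚ)
    (hp : p = Polynomial.C (a : ℚ) * Polynomial.X ^ 3 +
        Polynomial.C (-3 * (a : ℚ) - (c : ℚ)) * Polynomial.X ^ 2 +
        Polynomial.C (c : ℚ) * Polynomial.X + Polynomial.C (a : ℚ))
    (hirr : Irreducible p) (r : ℝ) (hr : Polynomial.aeval r p = 0) :
    Polynomial.aeval ((r - 1) / r) p = 0 ∧ CommonTails r ((r - 1) / r) := by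
  -- a ≠ 0
  have ha : (a : ℚ) ≠ 0 := by
    intro ha0
    rcases eq_or_ne (c : ℚ) 0 with hc | hc
    · rw [hp, ha0, hc] at hirr
      norm_num at hirr
    · have hfac : p = Polynomial.C (c : ℚ) * Polynomial.X * (1 - Polynomial.X) := by
        rw [hp, ha0]
        have h1 : (-3 * (0:ℚ) - c) = -c := by ring
        rw [h1, map_neg, map_zero]
        ring
      rcases hirr.isUnit_or_isUnit hfac with h | h
      · exact Polynomial.not_isUnit_of_natDegree_pos _
          (by rw [Polynomial.natDegree_C_mul_X _ hc]; norm_num) h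
      · exact Polynomial.not_isUnit_of_natDegree_pos _
          (by rw [show (1 - Polynomial.X : Polynomial ℚ) = -(Polynomial.X - Polynomial.C 1) by
                simp, Polynomial.natDegree_neg, Polynomial.natDegree_X_sub_C]; norm_num) h
  have hdeg : p.natDegree = 3 := by
    rw [hp]; compute_degree!
    all_goals exact_mod_cast ha
  -- r is irrational
  have hri : Irrational r := by
    intro hmem
    obtain ⟨q, hq⟩ := hmem
    have hq0 : Polynomial.aeval ((q : ℝ)) p = 0 := by rw [hq]; exact hr
    have heval : p.eval q = 0 := by
      have h2 : ((p.eval q : ℚ) : ℝ) = 0 := by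
        rw [← eq_ratCast (algebraMap ℚ ℝ) (p.eval q),
          ← Polynomial.aeval_algebraMap_apply_eq_algebraMap_eval,
          eq_ratCast (algebraMap ℚ ℝ) q, hq0]
      exact_mod_cast h2
    have hdvd : (Polynomial.X - Polynomial.C q) ∣ p :=
      Polynomial.dvd_iff_isRoot.mpr heval
    obtain ⟨k, hk⟩ := hdvd
    rcases hirr.isUnit_or_isUnit hk with h | h
    · exact Polynomial.not_isUnit_of_natDegree_pos _
        (by rw [Polynomial.natDegree_X_sub_C]; norm_num) h
    · have hk0 : k ≠ 0 := fun h0 => by simp [h0] at hk; rw [hk] at hdeg; simp at hdeg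
      rw [hk, Polynomial.natDegree_mul (Polynomial.X_sub_C_ne_zero q) hk0,
        Polynomial.natDegree_X_sub_C, Polynomial.natDegree_eq_zero_of_isUnit h] at hdeg
      omega
  have hrne : r ≠ 0 := hri.ne_zero
  -- the polynomial equation satisfied by r
  have e : (a:ℝ) * r^3 + (-3*(a:ℝ) - (c:ℝ)) * r^2 + (c:ℝ) * r + (a:ℝ) = 0 := by
    rw [hp] at hr
    simpa using hr
  -- (r-1)/r is a root
  have hroot : Polynomial.aeval ((r - 1) / r) p = 0 := by
    rw [hp]
    simp only [map_add, map_mul, map_pow, Polynomial.aeval_C, Polynomial.aeval_X, eq_ratCast]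
    push_cast
    field_simp
    linear_combination (-1) * e
  refine ⟨hroot, ?_⟩
  have hst : (r - 1) / r = 1 - 1/r := by field_simp
  rw [hst]
  exact tails_main hri
end
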